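/- For every integer k ≥ 1, the following identity of formal power series in q holds: Σ_{n=1}^∞ η̄_{2k}(n) q^n = (1/(q;q)_∞) · Σ_{n=1}^∞ (−1)^{n−1} q^{n(3n+1)/2 + kn} / (1 − q^n)^{2k}. -/

import Mathlib

open PowerSeries

/-- The rank of a partition: its largest part minus its number of parts. -/
def Nat.Partition.rank {n : ℕ} (p : n.Partition) : ℤ :=
  (p.parts.sup : ℤ) - (p.parts.card : ℤ)

/-- `N(m,n)`: the number of partitions of `n` with rank `m`. -/
noncomputable def rankCount (m : ℤ) (n : ℕ) : ℕ :=
  Nat.card {p : n.Partition // p.rank = m}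

/-- The symmetrized positive rank moment
`η̄_{2k}(n) = Σ_{m ≥ 1} binom(m + k - 1, 2k)·N(m,n)` (the summation index `m : ℕ`
below stands for the rank `m + 1`). -/
noncomputable def etaBarEven (k n : ℕ) : ℤ :=
  ∑' m : ℕ, Ring.choose ((m : ℤ) + (k : ℤ)) (2 * k) * (rankCount ((m : ℤ) + 1) n : ℤ)

/-- The infinite product `(q;q)_∞ = ∏_{n≥1} (1 - q^n)` as a formal power series in
`ℤ⟦X⟧`: its `N`-th coefficient is the (stable) `N`-th coefficient of the partial products. -/
noncomputable def qPochhammerInf : PowerSeries ℤ :=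
  PowerSeries.mk fun N =>
    PowerSeries.coeff (R := ℤ) N (∏ n ∈ Finset.range (N + 1), (1 - PowerSeries.X ^ (n + 1)))

/-- The sum `Σ_{j≥0} f j` of a family of power series in which `f j` has `X`-order
greater than `j`, so each coefficient receives only finitely many contributions. -/
noncomputable def seriesSum (f : ℕ → PowerSeries ℤ) : PowerSeries ℤ :=
  PowerSeries.mk fun N => ∑ j ∈ Finset.range (N + 1), PowerSeries.coeff (R := ℤ) N (f j)

/-!
Let `G_m(n)` be the number of partitions of `n` of rank greater than `m`. Dyson's map (remove the
largest part `a`, add one to each of the other `ℓ - 1` parts and append `a - ℓ - m - 1` parts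
equal to one) is a bijection from these partitions onto the partitions of `n - m - 2` of rank at
most `m + 3`, whence `G_m(n) + G_{m+3}(n - m - 2) = p(n - m - 2)`. Multiplied by `(q;q)_∞`, the
generating function of `G_m` therefore satisfies `F_m = q^(m+2) (1 - F_{m+3})`, and so does
`Σ_{s≥1} (-1)^(s-1) q^(s(3s+1)/2 + sm)`; these equations determine `F`.
Summation by parts turns `η̄_{2k}(n)` into `Σ_m C(m+k-1, 2k-1) G_m(n)`, and after exchanging the
two sums, `Σ_m C(m+k-1, 2k-1) q^(sm) = q^(sk) / (1 - q^s)^(2k)`.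
-/

open Finset

namespace Multiset

lemma sum_filter_ne_zero (s : Multiset ℕ) : (s.filter (· ≠ 0)).sum = s.sum := by
  induction s using Multiset.induction with
  | empty => simp
  | cons a s ih => by_cases h : a = 0 <;> simp [h, ih]

end Multiset

namespace Nat.Partition

variable {n : ℕ}

lemma parts_ne_zero (p : n.Partition) (hn : n ≠ 0) : p.parts ≠ 0 := by
  intro h
  exact hn (by rw [← p.parts_sum, h, Multiset.sum_zero])

lemma sup_mem_parts (p : n.Partition) (hn : n ≠ 0) : p.parts.sup ∈ p.parts := by
  obtain ⟨y, hy, hmax⟩ := Multiset.exists_max_image id (p.parts_ne_zero hn)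
  rwa [le_antisymm (Multiset.sup_le.2 hmax) (Multiset.le_sup hy)]

lemma sup_parts_le (p : n.Partition) : p.parts.sup ≤ n :=
  Multiset.sup_le.2 fun _ ↦ le_of_mem_parts

lemma rank_le_of_le_add_one {m : ℕ} (p : n.Partition) (h : n ≤ m + 1) : p.rank ≤ m := by
  rcases eq_or_ne n 0 with rfl | hn
  · simp [rank, partition_zero_parts]
  · have hcard : p.parts.card ≠ 0 := by simpa using p.parts_ne_zero hn
    have := p.sup_parts_le
    rw [rank]
    omega

section Dyson

variable {m : ℕ}

lemma sup_mem_parts_of_lt_rank {p : n.Partition} (hp : (m : ℤ) < p.rank) :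
    p.parts.sup ∈ p.parts :=
  p.sup_mem_parts fun hn ↦ (p.rank_le_of_le_add_one (m := m) (by omega)).not_gt hp

lemma card_parts_add_lt_sup {p : n.Partition} (hp : (m : ℤ) < p.rank) :
    p.parts.card + m < p.parts.sup := by
  rw [rank] at hp
  omega

def dysonMap (p : n.Partition) (hp : (m : ℤ) < p.rank) : (n - (m + 2)).Partition where
  parts := (p.parts.erase p.parts.sup).map (· + 1) +
    Multiset.replicate (p.parts.sup - p.parts.card - (m + 1)) 1
  parts_pos {i} hi := by
    rcases Multiset.mem_add.1 hi with hi | hi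
    · obtain ⟨x, -, rfl⟩ := Multiset.mem_map.1 hi
      exact x.succ_pos
    · rw [Multiset.eq_of_mem_replicate hi]
      exact one_pos
  parts_sum := by
    have hmem := sup_mem_parts_of_lt_rank hp
    have hsum : p.parts.sup + (p.parts.erase p.parts.sup).sum = n := by
      rw [← Multiset.sum_cons, Multiset.cons_erase hmem, p.parts_sum]
    have hcard := Multiset.card_erase_add_one hmem
    have := card_parts_add_lt_sup hp
    simp only [Multiset.sum_add, Multiset.sum_map_add, Multiset.map_id', Multiset.sum_replicate,
      Multiset.map_const', smul_eq_mul, mul_one]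
    omega

lemma card_dysonMap_parts {p : n.Partition} (hp : (m : ℤ) < p.rank) :
    (dysonMap p hp).parts.card = p.parts.sup - (m + 2) := by
  have hcard := Multiset.card_erase_add_one (sup_mem_parts_of_lt_rank hp)
  have := card_parts_add_lt_sup hp
  simp only [dysonMap, Multiset.card_add, Multiset.card_map, Multiset.card_replicate]
  omega

lemma rank_dysonMap_le {p : n.Partition} (hp : (m : ℤ) < p.rank) :
    (dysonMap p hp).rank ≤ m + 3 := by
  have hsup : (dysonMap p hp).parts.sup ≤ p.parts.sup + 1 := by
    refine Multiset.sup_le.2 fun b hb ↦ ?_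
    rcases Multiset.mem_add.1 hb with hb | hb
    · obtain ⟨x, hx, rfl⟩ := Multiset.mem_map.1 hb
      exact Nat.succ_le_succ (Multiset.le_sup (Multiset.mem_of_mem_erase hx))
    · rw [Multiset.eq_of_mem_replicate hb]
      omega
  have := card_parts_add_lt_sup hp
  rw [rank, card_dysonMap_parts]
  omega

lemma sum_map_sub_one_add_card (p : n.Partition) :
    (p.parts.map (· - 1)).sum + p.parts.card = n := calc
  _ = (p.parts.map fun x ↦ x - 1 + 1).sum := by simp [Multiset.sum_map_add]
  _ = n := by
    rw [Multiset.map_congr rfl fun x hx ↦ Nat.sub_add_cancel (p.parts_pos hx), Multiset.map_id',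
      p.parts_sum]

def dysonMapInv (q : (n - (m + 2)).Partition) (hn : m + 2 ≤ n) : n.Partition where
  parts := (q.parts.card + m + 2) ::ₘ (q.parts.map (· - 1)).filter (· ≠ 0)
  parts_pos {i} hi := by
    rcases Multiset.mem_cons.1 hi with rfl | hi
    · omega
    · exact Nat.pos_of_ne_zero (Multiset.mem_filter.1 hi).2
  parts_sum := by
    have := q.sum_map_sub_one_add_card
    rw [Multiset.sum_cons, Multiset.sum_filter_ne_zero]
    omega

lemma sup_dysonMapInv_parts {q : (n - (m + 2)).Partition} (hq : q.rank ≤ m + 3)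
    (hn : m + 2 ≤ n) : (dysonMapInv q hn).parts.sup = q.parts.card + m + 2 := by
  refine (Multiset.sup_cons _ _).trans (sup_eq_left.2 (Multiset.sup_le.2 fun b hb ↦ ?_))
  obtain ⟨x, hx, rfl⟩ := Multiset.mem_map.1 (Multiset.mem_of_mem_filter hb)
  have := Multiset.le_sup hx
  rw [rank] at hq
  omega

lemma lt_rank_dysonMapInv {q : (n - (m + 2)).Partition} (hq : q.rank ≤ m + 3)
    (hn : m + 2 ≤ n) : (m : ℤ) < (dysonMapInv q hn).rank := by
  have hcard : ((q.parts.map (· - 1)).filter (· ≠ 0)).card ≤ q.parts.card :=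
    (Multiset.card_le_card (Multiset.filter_le _ _)).trans_eq (Multiset.card_map _ _)
  rw [rank, sup_dysonMapInv_parts hq]
  simp only [dysonMapInv, Multiset.card_cons]
  omega

lemma dysonMapInv_dysonMap {p : n.Partition} (hp : (m : ℤ) < p.rank) (hn : m + 2 ≤ n) :
    dysonMapInv (dysonMap p hp) hn = p := by
  have hmem := sup_mem_parts_of_lt_rank hp
  have := card_parts_add_lt_sup hp
  have := Multiset.card_pos_iff_exists_mem.2 ⟨_, hmem⟩
  have hshift : ((dysonMap p hp).parts.map (· - 1)).filter (· ≠ 0) = p.parts.erase p.parts.sup := by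
    simp only [dysonMap, Multiset.map_add, Multiset.map_map, Function.comp_def,
      Nat.add_sub_cancel, Multiset.map_id', Multiset.map_replicate, Multiset.filter_add]
    rw [Multiset.filter_eq_self.2 fun x hx ↦ (p.parts_pos (Multiset.mem_of_mem_erase hx)).ne',
      Multiset.filter_eq_nil.2 fun x hx ↦ by simp [Multiset.eq_of_mem_replicate hx], add_zero]
  ext1
  change _ ::ₘ _ = _
  rw [hshift, card_dysonMap_parts, show p.parts.sup - (m + 2) + m + 2 = p.parts.sup by omega,
    Multiset.cons_erase hmem]

lemma dysonMap_dysonMapInv {q : (n - (m + 2)).Partition} (hq : q.rank ≤ m + 3)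
    (hn : m + 2 ≤ n) : dysonMap (dysonMapInv q hn) (lt_rank_dysonMapInv hq hn) = q := by
  have hF : (q.parts.map (· - 1)).filter (· ≠ 0) = (q.parts.filter (· ≠ 1)).map (· - 1) := by
    rw [Multiset.filter_map]
    congr 1
    refine Multiset.filter_congr fun x hx ↦ ?_
    have := q.parts_pos hx
    simp only [ne_eq, Function.comp_apply]
    omega
  have hG : ((q.parts.filter (· ≠ 1)).map (· - 1)).map (· + 1) = q.parts.filter (· ≠ 1) := by
    rw [Multiset.map_map]
    refine (Multiset.map_congr rfl fun x hx ↦ ?_).trans (Multiset.map_id _)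
    have := q.parts_pos (Multiset.mem_of_mem_filter hx)
    have := (Multiset.mem_filter.1 hx).2
    simp only [Function.comp_apply, id]
    omega
  have hones : q.parts.filter (¬· ≠ 1) = Multiset.replicate (q.parts.count 1) 1 := by
    simpa using Multiset.filter_eq' q.parts 1
  have hcard := congrArg Multiset.card (Multiset.filter_add_not (· ≠ 1) q.parts)
  rw [Multiset.card_add, hones, Multiset.card_replicate] at hcard
  ext1
  simp only [dysonMap, sup_dysonMapInv_parts hq]
  simp only [dysonMapInv]
  rw [Multiset.erase_cons_head, Multiset.card_cons, hF, hG, Multiset.card_map,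
    show q.parts.card + m + 2 - ((q.parts.filter (· ≠ 1)).card + 1) - (m + 1) = q.parts.count 1 by
      omega, ← hones, Multiset.filter_add_not]

def dysonEquiv (hn : m + 2 ≤ n) :
    {p : n.Partition // (m : ℤ) < p.rank} ≃ {q : (n - (m + 2)).Partition // q.rank ≤ m + 3} where
  toFun p := ⟨dysonMap p.1 p.2, rank_dysonMap_le p.2⟩
  invFun q := ⟨dysonMapInv q.1 hn, lt_rank_dysonMapInv q.2 hn⟩
  left_inv p := Subtype.ext (dysonMapInv_dysonMap p.2 hn)
  right_inv q := Subtype.ext (dysonMap_dysonMapInv q.2 hn)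

end Dyson

end Nat.Partition

def rankGtCount (m n : ℕ) : ℕ := #{p : n.Partition | (m : ℤ) < p.rank}

lemma rankGtCount_add_rankGtCount {m n : ℕ} (hn : m + 2 ≤ n) :
    rankGtCount m n + rankGtCount (m + 3) (n - (m + 2)) =
      Fintype.card (n - (m + 2)).Partition := by
  have hdyson : rankGtCount m n = #{q : (n - (m + 2)).Partition | q.rank ≤ m + 3} := by
    rw [rankGtCount, ← Fintype.card_subtype, ← Fintype.card_subtype,
      Fintype.card_congr (Nat.Partition.dysonEquiv hn)]
  rw [hdyson, rankGtCount, ← card_univ,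
    ← card_filter_add_card_filter_not (s := univ) fun q : (n - (m + 2)).Partition ↦ q.rank ≤ m + 3]
  congr 2
  ext q
  simp only [mem_filter, mem_univ, true_and, not_le]
  push_cast
  rfl

lemma rankGtCount_eq_zero {m n : ℕ} (h : n ≤ m + 1) : rankGtCount m n = 0 := by
  rw [rankGtCount, card_eq_zero, filter_eq_empty_iff]
  exact fun p _ ↦ not_lt.2 (p.rank_le_of_le_add_one h)

lemma rankCount_eq_rankGtCount_sub (m n : ℕ) :
    (rankCount (m + 1) n : ℤ) = rankGtCount m n - rankGtCount (m + 1) n := by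
  have hsplit : rankGtCount m n = rankCount (m + 1) n + rankGtCount (m + 1) n := by
    rw [rankCount, Nat.card_eq_fintype_card, Fintype.card_subtype, rankGtCount, rankGtCount,
      ← card_union_of_disjoint (disjoint_filter.2 fun p _ h ↦ by push_cast; omega), ← filter_or]
    congr 1
    ext p
    simp only [mem_filter, mem_univ, true_and]
    push_cast
    omega
  rw [hsplit]
  push_cast
  ring

-- Summation by parts: the backward difference of `m ↦ C(m + k, 2k)` is `C(m + k - 1, 2k - 1)`.
lemma sum_range_choose_mul_sub {k : ℕ} (hk : 1 ≤ k) (g : ℕ → ℤ) (N : ℕ) :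
    ∑ m ∈ range N, ((m + k).choose (2 * k) : ℤ) * (g m - g (m + 1)) =
      ∑ m ∈ range N, ((m + k - 1).choose (2 * k - 1) : ℤ) * g m -
        ((N + k - 1).choose (2 * k) : ℤ) * g N := by
  induction N with
  | zero => simp [Nat.choose_eq_zero_of_lt (show k - 1 < 2 * k by omega)]
  | succ N ih =>
    have hpascal : ((N + k).choose (2 * k) : ℤ) =
        (N + k - 1).choose (2 * k) + (N + k - 1).choose (2 * k - 1) := by
      obtain ⟨a, ha⟩ : ∃ a, N + k = a + 1 := ⟨N + k - 1, by omega⟩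
      obtain ⟨b, hb⟩ : ∃ b, 2 * k = b + 1 := ⟨2 * k - 1, by omega⟩
      rw [ha, hb, Nat.choose_succ_succ', Nat.add_sub_cancel, Nat.add_sub_cancel]
      push_cast
      ring
    rw [sum_range_succ, sum_range_succ, ih, show N + 1 + k - 1 = N + k by omega, hpascal]
    ring

lemma etaBarEven_eq_sum {k : ℕ} (hk : 1 ≤ k) (n : ℕ) :
    etaBarEven k n =
      ∑ m ∈ range (n + 1), ((m + k - 1).choose (2 * k - 1) : ℤ) * rankGtCount m n := by
  have hfinite : etaBarEven k n =
      ∑ m ∈ range (n + 1), ((m + k).choose (2 * k) : ℤ) * rankCount (m + 1) n := by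
    rw [etaBarEven, tsum_eq_sum (s := range (n + 1))]
    · refine sum_congr rfl fun m _ ↦ ?_
      rw [← Ring.choose_natCast]
      push_cast
      rfl
    · intro m hm
      rw [mem_range, not_lt] at hm
      have := rankCount_eq_rankGtCount_sub m n
      rw [rankGtCount_eq_zero (by omega), rankGtCount_eq_zero (by omega)] at this
      push_cast at this ⊢
      rw [this, mul_zero]
  simp_rw [hfinite, rankCount_eq_rankGtCount_sub]
  rw [sum_range_choose_mul_sub hk, rankGtCount_eq_zero (by omega), Nat.cast_zero, mul_zero,
    sub_zero]

section SeriesSum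

variable {f : ℕ → ℤ⟦X⟧}

lemma coeff_seriesSum (f : ℕ → ℤ⟦X⟧) (N : ℕ) :
    coeff N (seriesSum f) = ∑ j ∈ range (N + 1), coeff N (f j) :=
  coeff_mk _ _

lemma coeff_seriesSum_of_le (hf : ∀ j, X ^ j ∣ f j) {N B : ℕ} (h : N ≤ B) :
    coeff N (seriesSum f) = ∑ j ∈ range (B + 1), coeff N (f j) := by
  rw [coeff_seriesSum]
  refine sum_subset (range_subset_range.2 (by omega)) fun j _ hj ↦ ?_
  exact X_pow_dvd_iff.1 (hf j) N (by simpa using hj)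

lemma seriesSum_smul (c : ℤ) (f : ℕ → ℤ⟦X⟧) :
    seriesSum (fun j ↦ c • f j) = c • seriesSum f := by
  ext N
  simp only [coeff_seriesSum, map_zsmul, smul_eq_mul, mul_sum]

lemma seriesSum_comm (f : ℕ → ℕ → ℤ⟦X⟧) :
    seriesSum (fun i ↦ seriesSum (f i)) = seriesSum fun j ↦ seriesSum fun i ↦ f i j := by
  ext N
  simp only [coeff_seriesSum]
  exact sum_comm

lemma seriesSum_mul_left (hf : ∀ j, X ^ j ∣ f j) (g : ℤ⟦X⟧) :
    seriesSum (fun j ↦ g * f j) = g * seriesSum f := by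
  ext N
  rw [coeff_seriesSum, coeff_mul]
  simp_rw [coeff_mul]
  rw [sum_comm]
  refine sum_congr rfl fun x hx ↦ ?_
  rw [coeff_seriesSum_of_le hf (B := N) (by rw [HasAntidiagonal.mem_antidiagonal] at hx; omega),
    mul_sum]

lemma seriesSum_eq_add_seriesSum_succ (hf : ∀ j, X ^ j ∣ f j) :
    seriesSum f = f 0 + seriesSum fun j ↦ f (j + 1) := by
  ext N
  rw [map_add, coeff_seriesSum, coeff_seriesSum, sum_range_succ', sum_range_succ,
    X_pow_dvd_iff.1 (hf (N + 1)) N N.lt_succ_self, add_zero, add_comm]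

lemma seriesSum_smul_X_pow_mul {d : ℕ} (hd : d ≠ 0) (c : ℕ → ℤ) :
    seriesSum (fun j ↦ c j • X ^ (d * j)) = expand d hd (mk c) := by
  ext N
  simp only [coeff_seriesSum, coeff_expand, coeff_mk, map_zsmul, coeff_X_pow, smul_eq_mul,
    mul_ite, mul_one, mul_zero]
  split_ifs with hdN
  · obtain ⟨q, rfl⟩ := hdN
    have hd' := Nat.pos_of_ne_zero hd
    rw [Nat.mul_div_cancel_left _ hd', sum_eq_single_of_mem q (mem_range.2 (by nlinarith)),
      if_pos rfl]
    exact fun j _ hj ↦ if_neg fun h ↦ hj (Nat.eq_of_mul_eq_mul_left hd' h).symm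
  · exact sum_eq_zero fun j _ ↦ if_neg fun h ↦ hdN ⟨j, h⟩

end SeriesSum

section Pochhammer

variable {R : Type*} [CommRing R]

lemma coeff_mul_eq_of_X_pow_dvd_sub_one {f g : R⟦X⟧} {N : ℕ} (h : X ^ (N + 1) ∣ g - 1) :
    coeff N (f * g) = coeff N f := by
  have := X_pow_dvd_iff.1 (dvd_mul_of_dvd_right h f) N N.lt_succ_self
  rwa [mul_sub, mul_one, map_sub, sub_eq_zero] at this

lemma X_pow_dvd_prod_one_sub_X_pow_sub_one {N : ℕ} {s : Finset ℕ} (hs : ∀ i ∈ s, N ≤ i) :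
    (X : R⟦X⟧) ^ (N + 1) ∣ ∏ i ∈ s, (1 - X ^ (i + 1)) - 1 := by
  induction s using Finset.induction_on with
  | empty => simp
  | insert a s ha ih =>
    rw [prod_insert ha, show ∀ P : R⟦X⟧, (1 - X ^ (a + 1)) * P - 1 = P - 1 - X ^ (a + 1) * P by
      intro P; ring]
    exact dvd_sub (ih fun i hi ↦ hs i (mem_insert_of_mem hi))
      (dvd_mul_of_dvd_left (pow_dvd_pow X (by have := hs a (mem_insert_self a s); omega)) _)

lemma coeff_prod_one_sub_X_pow_of_range_subset (N : ℕ) {s : Finset ℕ} (hs : range N ⊆ s) :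
    coeff N (∏ i ∈ s, (1 - X ^ (i + 1) : R⟦X⟧)) =
      coeff N (∏ i ∈ range N, (1 - X ^ (i + 1) : R⟦X⟧)) := by
  rw [← prod_sdiff hs, mul_comm, coeff_mul_eq_of_X_pow_dvd_sub_one
    (X_pow_dvd_prod_one_sub_X_pow_sub_one fun i hi ↦ by simpa using (mem_sdiff.1 hi).2)]

end Pochhammer

section PiTopology

open scoped PowerSeries.WithPiTopology

lemma hasProd_qPochhammerInf : HasProd (fun i ↦ (1 - X ^ (i + 1) : ℤ⟦X⟧)) qPochhammerInf := by
  rw [HasProd, WithPiTopology.tendsto_iff_coeff_tendsto]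
  refine fun N ↦ tendsto_nhds_of_eventually_eq ?_
  filter_upwards [Filter.eventually_ge_atTop (range N)] with s hs
  rw [coeff_prod_one_sub_X_pow_of_range_subset N hs, qPochhammerInf, coeff_mk,
    coeff_prod_one_sub_X_pow_of_range_subset N (range_subset_range.2 N.le_succ)]

noncomputable def partitionSeries : ℤ⟦X⟧ := mk fun n ↦ (Fintype.card n.Partition : ℤ)

lemma qPochhammerInf_mul_partitionSeries : qPochhammerInf * partitionSeries = 1 := by
  have hgeom (i : ℕ) : (1 - X ^ (i + 1) : ℤ⟦X⟧) * ∑' j, X ^ ((i + 1) * j) = 1 := by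
    simp_rw [pow_mul]
    rw [mul_comm, WithPiTopology.tsum_pow_mul_one_sub_of_constantCoeff_eq_zero (by simp)]
  have h := hasProd_qPochhammerInf.mul
    (Nat.Partition.hasProd_powerSeriesMk_card_restricted ℤ fun _ ↦ True)
  simp only [if_true, hgeom, Nat.Partition.restricted, imp_true_iff, filter_true, card_univ] at h
  exact h.unique hasProd_one

end PiTopology

noncomputable def rankGtSeries (m : ℕ) : ℤ⟦X⟧ := mk fun n ↦ (rankGtCount m n : ℤ)

lemma X_pow_dvd_rankGtSeries (m : ℕ) : X ^ m ∣ rankGtSeries m :=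
  X_pow_dvd_iff.2 fun N hN ↦ by
    rw [rankGtSeries, coeff_mk, rankGtCount_eq_zero (by omega), Nat.cast_zero]

lemma rankGtSeries_eq (m : ℕ) :
    rankGtSeries m = X ^ (m + 2) * (partitionSeries - rankGtSeries (m + 3)) := by
  ext n
  rw [coeff_X_pow_mul', rankGtSeries, coeff_mk]
  split_ifs with h
  · rw [map_sub, partitionSeries, rankGtSeries, coeff_mk, coeff_mk,
      ← rankGtCount_add_rankGtCount h]
    push_cast
    ring
  · rw [rankGtCount_eq_zero (by omega), Nat.cast_zero]

-- Since `e m ≠ 0`, the `N`-th coefficient of `f m` is determined by coefficients of lower index.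
lemma eq_of_eq_X_pow_mul_one_sub {R : Type*} [CommRing R] {e σ : ℕ → ℕ} (he : ∀ m, e m ≠ 0)
    {f g : ℕ → R⟦X⟧} (hf : ∀ m, f m = X ^ e m * (1 - f (σ m)))
    (hg : ∀ m, g m = X ^ e m * (1 - g (σ m))) : f = g := by
  suffices ∀ N m, coeff N (f m) = coeff N (g m) from funext fun m ↦ ext fun N ↦ this N m
  intro N
  induction N using Nat.strong_induction_on with
  | _ N ih =>
    intro m
    rw [hf, hg, coeff_X_pow_mul', coeff_X_pow_mul']
    split_ifs
    · rw [map_sub, map_sub, ih _ (by have := he m; omega)]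
    · rfl

lemma succ_mul_three_mul_succ_add_one_div_two (j : ℕ) :
    (j + 1) * (3 * (j + 1) + 1) / 2 = j * (3 * j + 1) / 2 + (3 * j + 2) := by
  rw [show (j + 1) * (3 * (j + 1) + 1) = j * (3 * j + 1) + (3 * j + 2) * 2 by ring,
    Nat.add_mul_div_right _ _ two_pos]

lemma le_succ_mul_three_mul_succ_add_one_div_two (j : ℕ) :
    j ≤ (j + 1) * (3 * (j + 1) + 1) / 2 := by
  rw [Nat.le_div_iff_mul_le two_pos]
  nlinarith

noncomputable def rankGtNumerator (m : ℕ) : ℤ⟦X⟧ :=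
  seriesSum fun s ↦ (-1 : ℤ) ^ s • X ^ ((s + 1) * (3 * (s + 1) + 1) / 2 + (s + 1) * m)

lemma X_pow_dvd_rankGtNumerator_term (m s : ℕ) :
    X ^ s ∣ (-1 : ℤ) ^ s • (X : ℤ⟦X⟧) ^ ((s + 1) * (3 * (s + 1) + 1) / 2 + (s + 1) * m) :=
  dvd_smul_of_dvd _ <| pow_dvd_pow X <|
    (le_succ_mul_three_mul_succ_add_one_div_two s).trans (Nat.le_add_right _ _)

lemma rankGtNumerator_eq (m : ℕ) :
    rankGtNumerator m = X ^ (m + 2) * (1 - rankGtNumerator (m + 3)) := by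
  have hterm (s : ℕ) : (-1 : ℤ) ^ (s + 1) •
      (X : ℤ⟦X⟧) ^ ((s + 1 + 1) * (3 * (s + 1 + 1) + 1) / 2 + (s + 1 + 1) * m) =
        -X ^ (m + 2) *
          ((-1 : ℤ) ^ s • X ^ ((s + 1) * (3 * (s + 1) + 1) / 2 + (s + 1) * (m + 3))) := by
    rw [succ_mul_three_mul_succ_add_one_div_two (s + 1), pow_succ, mul_comm, mul_smul, neg_one_smul,
      mul_smul_comm, neg_mul, ← pow_add]
    ring_nf
  rw [rankGtNumerator, seriesSum_eq_add_seriesSum_succ (X_pow_dvd_rankGtNumerator_term m)]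
  simp_rw [hterm]
  rw [seriesSum_mul_left (X_pow_dvd_rankGtNumerator_term (m + 3)), ← rankGtNumerator, pow_zero,
    one_smul, show (0 + 1) * (3 * (0 + 1) + 1) / 2 + (0 + 1) * m = m + 2 by omega]
  ring

lemma qPochhammerInf_mul_rankGtSeries (m : ℕ) :
    qPochhammerInf * rankGtSeries m = rankGtNumerator m := by
  refine congrFun (eq_of_eq_X_pow_mul_one_sub (e := (· + 2)) (σ := (· + 3))
    (f := fun m ↦ qPochhammerInf * rankGtSeries m) (by simp) (fun m ↦ ?_) rankGtNumerator_eq) m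
  rw [rankGtSeries_eq]
  linear_combination X ^ (m + 2) * qPochhammerInf_mul_partitionSeries

section InvOneSubPow

variable {R : Type*} [CommRing R]

lemma inverse_one_sub_X_pow_pow {d : ℕ} (hd : d ≠ 0) (r : ℕ) :
    Ring.inverse ((1 - X ^ d : R⟦X⟧) ^ r) = expand d hd (invOneSubPow R r).val := by
  have h : expand d hd (invOneSubPow R r).val * (1 - X ^ d) ^ r = 1 := by
    have : (1 - X ^ d : R⟦X⟧) ^ r = expand d hd (invOneSubPow R r).inv := by
      rw [invOneSubPow_inv_eq_one_sub_pow, map_pow, map_sub, map_one, expand_X]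
    rw [this, ← map_mul, (invOneSubPow R r).val_inv, map_one]
  calc Ring.inverse ((1 - X ^ d : R⟦X⟧) ^ r)
      = expand d hd (invOneSubPow R r).val * (1 - X ^ d) ^ r * Ring.inverse ((1 - X ^ d) ^ r) := by
        rw [h, one_mul]
    _ = expand d hd (invOneSubPow R r).val :=
        Ring.mul_inverse_cancel_right _ _ (IsUnit.of_mul_eq_one_right _ h)

lemma mk_choose_eq_X_pow_mul_invOneSubPow {k : ℕ} (hk : 1 ≤ k) :
    (mk fun m ↦ ((m + k - 1).choose (2 * k - 1) : R)) = X ^ k * (invOneSubPow R (2 * k)).val := by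
  ext m
  rw [coeff_mk, coeff_X_pow_mul', invOneSubPow_val_eq_mk_sub_one_add_choose_of_pos _ _ (by omega),
    coeff_mk]
  split_ifs with h
  · rw [show 2 * k - 1 + (m - k) = m + k - 1 by omega]
  · rw [Nat.choose_eq_zero_of_lt (by omega), Nat.cast_zero]

end InvOneSubPow

lemma etaBarEven_series_eq {k : ℕ} (hk : 1 ≤ k) :
    (mk fun n ↦ etaBarEven k n) =
      seriesSum fun m ↦ ((m + k - 1).choose (2 * k - 1) : ℤ) • rankGtSeries m := by
  ext n
  simp only [coeff_mk, coeff_seriesSum, etaBarEven_eq_sum hk, map_zsmul, rankGtSeries, smul_eq_mul]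

lemma seriesSum_choose_smul_X_pow_mul {k d : ℕ} (hk : 1 ≤ k) (hd : d ≠ 0) :
    (seriesSum fun m ↦ ((m + k - 1).choose (2 * k - 1) : ℤ) • X ^ (d * m)) =
      X ^ (d * k) * Ring.inverse ((1 - X ^ d) ^ (2 * k)) := by
  rw [seriesSum_smul_X_pow_mul hd, mk_choose_eq_X_pow_mul_invOneSubPow hk, map_mul, map_pow,
    expand_X, inverse_one_sub_X_pow_pow hd, ← pow_mul]

lemma qPochhammerInf_mul_etaBarEven_series {k : ℕ} (hk : 1 ≤ k) :
    qPochhammerInf * (mk fun n ↦ etaBarEven k n) =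
      seriesSum fun j ↦ (-1 : ℤ) ^ j • (X ^ ((j + 1) * (3 * (j + 1) + 1) / 2 + k * (j + 1)) *
        Ring.inverse ((1 - X ^ (j + 1)) ^ (2 * k))) := calc
  _ = seriesSum fun m ↦
        ((m + k - 1).choose (2 * k - 1) : ℤ) • (qPochhammerInf * rankGtSeries m) := by
    rw [etaBarEven_series_eq hk,
      ← seriesSum_mul_left fun m ↦ dvd_smul_of_dvd _ (X_pow_dvd_rankGtSeries m)]
    simp_rw [mul_smul_comm]
  _ = seriesSum fun m ↦ seriesSum fun j ↦ ((m + k - 1).choose (2 * k - 1) : ℤ) •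
        (-1 : ℤ) ^ j • X ^ ((j + 1) * (3 * (j + 1) + 1) / 2 + (j + 1) * m) := by
    simp_rw [qPochhammerInf_mul_rankGtSeries, rankGtNumerator, seriesSum_smul]
  _ = seriesSum fun j ↦ seriesSum fun m ↦ ((m + k - 1).choose (2 * k - 1) : ℤ) •
        (-1 : ℤ) ^ j • X ^ ((j + 1) * (3 * (j + 1) + 1) / 2 + (j + 1) * m) :=
    seriesSum_comm _
  _ = _ := by
    congr 1
    funext j
    have hdvd (m : ℕ) : X ^ m ∣ ((m + k - 1).choose (2 * k - 1) : ℤ) • (X : ℤ⟦X⟧) ^ ((j + 1) * m) :=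
      dvd_smul_of_dvd _ (pow_dvd_pow X (Nat.le_mul_of_pos_left m j.succ_pos))
    rw [pow_add, mul_comm k, mul_assoc, ← seriesSum_choose_smul_X_pow_mul hk j.succ_ne_zero,
      ← seriesSum_mul_left hdvd, ← seriesSum_smul]
    congr 1
    funext m
    rw [pow_add, smul_comm, mul_smul_comm]

/-- The summation index `j` stands for `n = j + 1`; the coefficient of `q⁰` on the left is
`η̄_{2k}(0) = 0`. -/
theorem etaBarEven_generating_function (k : ℕ) (hk : 1 ≤ k) :
    (PowerSeries.mk fun n => etaBarEven k n) =
      Ring.inverse qPochhammerInf *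
        seriesSum (fun j =>
          ((-1 : ℤ) ^ j) •
            (PowerSeries.X ^ ((j + 1) * (3 * (j + 1) + 1) / 2 + k * (j + 1)) *
              Ring.inverse ((1 - PowerSeries.X ^ (j + 1)) ^ (2 * k)))) := by
  have hinv : Ring.inverse qPochhammerInf = partitionSeries := by
    rw [← mul_one (Ring.inverse _), ← qPochhammerInf_mul_partitionSeries,
      Ring.inverse_mul_cancel_left _ _ (IsUnit.of_mul_eq_one _ qPochhammerInf_mul_partitionSeries)]
  rw [hinv, ← qPochhammerInf_mul_etaBarEven_series hk, ← mul_assoc, mul_comm partitionSeries,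
    qPochhammerInf_mul_partitionSeries, one_mul]
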